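/- Let U ⊆ ℂ be an open set and N : U → ℍ a smooth map into the quaternions with Re N = 0 and N² = −1 pointwise (i.e. N takes values in S² ⊂ Im ℍ). Then N is harmonic, i.e. N_xx + N_yy = N·(N_x² + N_y²) on U (quaternionic products), if and only if the 1-form *A with components *A(∂x) = ¼(N·N_y − N_x), *A(∂y) = −¼(N·N_x + N_y) is closed, i.e. ∂x(N·N_x + N_y) + ∂y(N·N_y − N_x) = 0 on U. (Chart version of Lemma 2.1: N is harmonic iff the Hopf field A of the associated complex structure satisfies d*A = 0.) -/

import Mathlib

/-! By the product rule, and because the mixed second partials cancel by symmetry,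
`∂x(N N_x + N_y) + ∂y(N N_y - N_x) = N_x² + N_y² + N ΔN`.
Since `N² = -1`, left multiplication by `N` turns the vanishing of this expression into
`ΔN = N (N_x² + N_y²)` and back. -/

noncomputable section
open Complex

local notation "ℍ" => Quaternion ℝ

/-- Partial derivative in the direction 1 (the x-direction). -/
def dx (f : ℂ → ℍ) (z : ℂ) : ℍ := fderiv ℝ f z 1

/-- Partial derivative in the direction i (the y-direction). -/
def dy (f : ℂ → ℍ) (z : ℂ) : ℍ := fderiv ℝ f z Complex.I

theorem eq_mul_iff_add_mul_eq_zero {R : Type*} [Ring R] {n : R} (hn : n * n = -1) (a b : R) :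
    a = n * b ↔ b + n * a = 0 := by
  constructor
  · rintro rfl
    rw [← mul_assoc, hn]
    noncomm_ring
  · intro h
    calc a = -(n * n) * a := by rw [hn]; noncomm_ring
      _ = -(n * (n * a)) := by noncomm_ring
      _ = n * b := by rw [eq_neg_of_add_eq_zero_right h]; noncomm_ring

section SecondDerivative

variable {𝕜 E F : Type*} [NontriviallyNormedField 𝕜] [NormedAddCommGroup E] [NormedSpace 𝕜 E]
  {f : E → F} {z : E}

theorem ContDiffAt.hasFDerivAt_fderiv_apply [NormedAddCommGroup F] [NormedSpace 𝕜 F]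
    (hf : ContDiffAt 𝕜 2 f z) (a : E) :
    HasFDerivAt (fun w => fderiv 𝕜 f w a) ((fderiv 𝕜 (fderiv 𝕜 f) z).flip a) z := by
  have hf' : DifferentiableAt 𝕜 (fderiv 𝕜 f) z :=
    (hf.fderiv_right (m := 1) (by norm_num)).differentiableAt one_ne_zero
  simpa using hf'.hasFDerivAt.clm_apply (hasFDerivAt_const a z)

theorem ContDiffAt.fderiv_fderiv_apply [NormedAddCommGroup F] [NormedSpace 𝕜 F]
    (hf : ContDiffAt 𝕜 2 f z) (a b : E) :
    fderiv 𝕜 (fun w => fderiv 𝕜 f w a) z b = fderiv 𝕜 (fderiv 𝕜 f) z b a := by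
  rw [(hf.hasFDerivAt_fderiv_apply a).fderiv, ContinuousLinearMap.flip_apply]

theorem ContDiffAt.hasFDerivAt_mul_fderiv_apply [NormedRing F] [NormedAlgebra 𝕜 F]
    (hf : ContDiffAt 𝕜 2 f z) (a : E) :
    HasFDerivAt (fun w => f w * fderiv 𝕜 f w a)
      (f z • (fderiv 𝕜 (fderiv 𝕜 f) z).flip a
        + MulOpposite.op (fderiv 𝕜 f z a) • fderiv 𝕜 f z) z :=
  (hf.differentiableAt two_ne_zero).hasFDerivAt.fun_mul' (hf.hasFDerivAt_fderiv_apply a)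

end SecondDerivative

theorem ContDiffAt.hopf_divergence_eq {𝕜 E F : Type*} [RCLike 𝕜] [NormedAddCommGroup E]
    [NormedSpace 𝕜 E] [NormedRing F] [NormedAlgebra 𝕜 F] {f : E → F} {z : E}
    (hf : ContDiffAt 𝕜 2 f z) (u v : E) :
    fderiv 𝕜 (fun w => f w * fderiv 𝕜 f w u + fderiv 𝕜 f w v) z u
        + fderiv 𝕜 (fun w => f w * fderiv 𝕜 f w v - fderiv 𝕜 f w u) z v
      = fderiv 𝕜 f z u * fderiv 𝕜 f z u + fderiv 𝕜 f z v * fderiv 𝕜 f z v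
        + f z * (fderiv 𝕜 (fderiv 𝕜 f) z u u + fderiv 𝕜 (fderiv 𝕜 f) z v v) := by
  have hsymm : fderiv 𝕜 (fderiv 𝕜 f) z u v = fderiv 𝕜 (fderiv 𝕜 f) z v u :=
    hf.isSymmSndFDerivAt (by simp [minSmoothness_of_isRCLikeNormedField]) u v
  rw [((hf.hasFDerivAt_mul_fderiv_apply u).fun_add (hf.hasFDerivAt_fderiv_apply v)).fderiv,
    ((hf.hasFDerivAt_mul_fderiv_apply v).fun_sub (hf.hasFDerivAt_fderiv_apply u)).fderiv]
  simp only [add_apply, sub_apply, smul_apply, ContinuousLinearMap.flip_apply, smul_eq_mul,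
    op_smul_eq_mul]
  rw [hsymm]
  noncomm_ring

theorem stmt_0 (U : Set ℂ) (hU : IsOpen U) (N : ℂ → ℍ)
    (hsmooth : ContDiffOn ℝ (⊤ : ℕ∞) N U)
    (hsq : ∀ z ∈ U, N z * N z = -1) :
    (∀ z ∈ U, dx (dx N) z + dy (dy N) z
        = N z * (dx N z * dx N z + dy N z * dy N z))
    ↔ (∀ z ∈ U,
        dx (fun w => N w * dx N w + dy N w) z
          + dy (fun w => N w * dy N w - dx N w) z = 0) := by
  refine forall₂_congr fun z hz => ?_
  have hN : ContDiffAt ℝ 2 N z :=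
    (hsmooth.contDiffAt (hU.mem_nhds hz)).of_le (WithTop.coe_le_coe.2 le_top)
  rw [eq_mul_iff_add_mul_eq_zero (hsq z hz)]
  have hxx : dx (dx N) z = fderiv ℝ (fderiv ℝ N) z 1 1 := hN.fderiv_fderiv_apply 1 1
  have hyy : dy (dy N) z = fderiv ℝ (fderiv ℝ N) z I I := hN.fderiv_fderiv_apply I I
  rw [hxx, hyy]
  simp only [dx, dy, hN.hopf_divergence_eq]
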